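/- Ratio monotonicity for shifted Gaussian CDF differences (Lemma B.3): Let γ* > 0. Define t_+ = (3/2)γ* + (1/γ*) log(1 − √(1 − e^{−γ*})) and t_− = (3/2)γ* + (1/γ*) log(1 + √(1 − e^{−γ*})), let k = e^{−(1/2)(t_− − 2γ*)² + (1/2)(t_+ − 2γ*)²} and c = k/(1+k) (so c ∈ (0,1) and c/(1−c) = k). Define h(x) = ( Φ(t_− − x) − Φ(t_− − 2γ*) ) / ( Φ(t_+ − x) − Φ(t_+ − 2γ*) ) for x ≠ 2γ*, where Φ is the standard normal CDF. Then h(x) ≤ c/(1−c) for all x < 2γ*, and h(x) ≥ c/(1−c) for all x > 2γ*. -/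

import Mathlib

open MeasureTheory Set

/-- `Φ`, the standard normal CDF. -/
noncomputable def stdNormCDF (t : ℝ) : ℝ :=
  ∫ x in Set.Iic t, Real.exp (-(x ^ 2) / 2) / Real.sqrt (2 * Real.pi)

noncomputable def stdPhi (x : ℝ) : ℝ := Real.exp (-(x ^ 2) / 2) / Real.sqrt (2 * Real.pi)

lemma stdPhi_pos (x : ℝ) : 0 < stdPhi x :=
  div_pos (Real.exp_pos _) (Real.sqrt_pos.mpr (by positivity))

lemma stdPhi_integrable : Integrable stdPhi := by
  have h : Integrable (fun x : ℝ => Real.exp (-(1/2 : ℝ) * x ^ 2)) :=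
    integrable_exp_neg_mul_sq (by norm_num)
  have : stdPhi = fun x => Real.exp (-(1/2 : ℝ) * x ^ 2) / Real.sqrt (2 * Real.pi) := by
    funext x; unfold stdPhi; ring_nf
  rw [this]
  exact h.div_const _

lemma stdNormCDF_sub (r s : ℝ) :
    stdNormCDF s - stdNormCDF r = ∫ t in r..s, stdPhi t := by
  unfold stdNormCDF
  exact intervalIntegral.integral_Iic_sub_Iic stdPhi_integrable.integrableOn
    stdPhi_integrable.integrableOn

lemma stdPhi_shift_le {B d t : ℝ} (hd : 0 ≤ d) (ht : B ≤ t) :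
    stdPhi (t + d) ≤ Real.exp (-(1/2) * (B + d) ^ 2 + (1/2) * B ^ 2) * stdPhi t := by
  unfold stdPhi
  rw [← mul_div_assoc, ← Real.exp_add,
    div_le_div_iff_of_pos_right (Real.sqrt_pos.mpr (by positivity))]
  exact Real.exp_le_exp.mpr (by nlinarith)

lemma stdPhi_shift_ge {B d t : ℝ} (hd : 0 ≤ d) (ht : t ≤ B) :
    Real.exp (-(1/2) * (B + d) ^ 2 + (1/2) * B ^ 2) * stdPhi t ≤ stdPhi (t + d) := by
  unfold stdPhi
  rw [← mul_div_assoc, ← Real.exp_add,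
    div_le_div_iff_of_pos_right (Real.sqrt_pos.mpr (by positivity))]
  exact Real.exp_le_exp.mpr (by nlinarith)

/-- Ratio monotonicity for shifted Gaussian CDF differences (Lemma B.3). -/
theorem ratio_monotonicity (γs : ℝ) (hγ : 0 < γs) :
    let tp : ℝ := 3 / 2 * γs + 1 / γs * Real.log (1 - Real.sqrt (1 - Real.exp (-γs)))
    let tm : ℝ := 3 / 2 * γs + 1 / γs * Real.log (1 + Real.sqrt (1 - Real.exp (-γs)))
    let k : ℝ := Real.exp (-(1 / 2) * (tm - 2 * γs) ^ 2 + (1 / 2) * (tp - 2 * γs) ^ 2)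
    let c : ℝ := k / (1 + k)
    (∀ x : ℝ, x < 2 * γs →
      (stdNormCDF (tm - x) - stdNormCDF (tm - 2 * γs)) /
        (stdNormCDF (tp - x) - stdNormCDF (tp - 2 * γs)) ≤ c / (1 - c)) ∧
    (∀ x : ℝ, x > 2 * γs →
      (stdNormCDF (tm - x) - stdNormCDF (tm - 2 * γs)) /
        (stdNormCDF (tp - x) - stdNormCDF (tp - 2 * γs)) ≥ c / (1 - c)) := by
  intro tp tm k c
  set s : ℝ := Real.sqrt (1 - Real.exp (-γs)) with hs
  -- basic facts about s
  have hexp1 : Real.exp (-γs) < 1 := Real.exp_lt_one_iff.mpr (by linarith)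
  have hs0 : 0 ≤ s := Real.sqrt_nonneg _
  have hs1 : s < 1 := by
    nlinarith [Real.sq_sqrt (show (0:ℝ) ≤ 1 - Real.exp (-γs) by linarith), Real.exp_pos (-γs), hs0]
  -- tm ≥ tp
  have hd : 0 ≤ tm - tp := by
    have hlog : Real.log (1 - s) ≤ Real.log (1 + s) :=
      Real.log_le_log (by linarith) (by linarith)
    have : tm - tp = 1 / γs * (Real.log (1 + s) - Real.log (1 - s)) := by
      simp only [tm, tp]; ring
    rw [this]
    have h1γ : 0 ≤ 1 / γs := by positivity
    nlinarith
  set A : ℝ := tm - 2 * γs with hA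
  set B : ℝ := tp - 2 * γs with hB
  set d : ℝ := A - B with hdd
  have hd' : 0 ≤ d := by simp only [hdd, hA, hB]; linarith
  have hAB : A = B + d := by simp [hdd]
  have hk : k = Real.exp (-(1/2) * (B + d) ^ 2 + (1/2) * B ^ 2) := by
    simp only [k, ← hA, ← hB, hAB]
    try norm_num
  have hkpos : 0 < k := Real.exp_pos _
  have hcc : c / (1 - c) = k := by
    have h1k : (1 : ℝ) + k ≠ 0 := by positivity
    simp only [c]
    field_simp
    ring
  rw [hcc] at *
  constructor
  · intro x hx
    have hu : (0:ℝ) < 2 * γs - x := by linarith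
    -- denominator
    have hden_eq : stdNormCDF (tp - x) - stdNormCDF B = ∫ t in B..(B + (2 * γs - x)), stdPhi t := by
      rw [stdNormCDF_sub]
      congr 1 <;> (try simp only [hA, hB, hdd]) <;> try ring
    have hden_pos : 0 < ∫ t in B..(B + (2 * γs - x)), stdPhi t :=
      intervalIntegral.intervalIntegral_pos_of_pos
        (stdPhi_integrable.intervalIntegrable) stdPhi_pos (by linarith)
    have hnum_eq : stdNormCDF (tm - x) - stdNormCDF A
        = ∫ t in B..(B + (2 * γs - x)), stdPhi (t + d) := by
      rw [stdNormCDF_sub, intervalIntegral.integral_comp_add_right]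
      congr 1 <;> (try simp only [hA, hB, hdd]) <;> try ring
    have hmono : (∫ t in B..(B + (2 * γs - x)), stdPhi (t + d))
        ≤ ∫ t in B..(B + (2 * γs - x)), k * stdPhi t := by
      apply intervalIntegral.integral_mono_on (by linarith)
      · exact ((stdPhi_integrable.comp_add_right d).intervalIntegrable)
      · exact ((stdPhi_integrable.const_mul k).intervalIntegrable)
      · intro t ht
        rw [hk]
        exact stdPhi_shift_le hd' ht.1
    rw [hnum_eq, hden_eq, div_le_iff₀ hden_pos]
    calc (∫ t in B..(B + (2 * γs - x)), stdPhi (t + d))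
        ≤ ∫ t in B..(B + (2 * γs - x)), k * stdPhi t := hmono
      _ = k * ∫ t in B..(B + (2 * γs - x)), stdPhi t := by
          rw [intervalIntegral.integral_const_mul]
  · intro x hx
    have hu : (0:ℝ) < x - 2 * γs := by linarith
    have hden_eq : stdNormCDF (tp - x) - stdNormCDF B
        = -(∫ t in (B - (x - 2 * γs))..B, stdPhi t) := by
      rw [stdNormCDF_sub, ← intervalIntegral.integral_symm]
      congr 1 <;> (try simp only [hA, hB, hdd]) <;> try ring
    have hden_pos : 0 < ∫ t in (B - (x - 2 * γs))..B, stdPhi t :=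
      intervalIntegral.intervalIntegral_pos_of_pos
        (stdPhi_integrable.intervalIntegrable) stdPhi_pos (by linarith)
    have hnum_eq : stdNormCDF (tm - x) - stdNormCDF A
        = -(∫ t in (B - (x - 2 * γs))..B, stdPhi (t + d)) := by
      rw [stdNormCDF_sub, ← intervalIntegral.integral_symm,
        intervalIntegral.integral_comp_add_right]
      congr 1 <;> (try simp only [hA, hB, hdd]) <;> try ring
    have hmono : (∫ t in (B - (x - 2 * γs))..B, k * stdPhi t)
        ≤ ∫ t in (B - (x - 2 * γs))..B, stdPhi (t + d) := by
      apply intervalIntegral.integral_mono_on (by linarith)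
      · exact ((stdPhi_integrable.const_mul k).intervalIntegrable)
      · exact ((stdPhi_integrable.comp_add_right d).intervalIntegrable)
      · intro t ht
        rw [hk]
        exact stdPhi_shift_ge hd' ht.2
    rw [hnum_eq, hden_eq, neg_div_neg_eq, ge_iff_le, le_div_iff₀ hden_pos]
    calc k * (∫ t in (B - (x - 2 * γs))..B, stdPhi t)
        = ∫ t in (B - (x - 2 * γs))..B, k * stdPhi t := by
          rw [intervalIntegral.integral_const_mul]
      _ ≤ _ := hmono
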